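/- Assume min(a,b,c,d) < 0. For every x ∈ Sk(a,b,c,d) there exists a finite composition g of the maps trop(s₁), trop(s₂), trop(s₃) such that g(x) ∈ 𝒞(AX₁) ∪ 𝒞(BX₂) ∪ 𝒞(CX₃) ∪ 𝒞(D) ∪ ⋃_{i≠j} (𝒞(Xᵢ²) ∩ 𝒞(Xⱼ²)), i.e. g(x) lies in a subquadratic cell or on a boundary ray. -/

import Mathlib

noncomputable section

abbrev R3 : Type := ℝ × ℝ × ℝ

/-- The minimum of the tropical monomials of the Markov cubic, computed in `WithTop ℝ`
(a term equal to `⊤ = ∞` is automatically irrelevant for the minimum). -/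
def tmin (a b c d : WithTop ℝ) (x : R3) : WithTop ℝ :=
  min (min (min ((2 * x.1 : ℝ) : WithTop ℝ) ((2 * x.2.1 : ℝ) : WithTop ℝ))
        (min ((2 * x.2.2 : ℝ) : WithTop ℝ) (a + (x.1 : WithTop ℝ))))
    (min (min (b + (x.2.1 : WithTop ℝ)) (c + (x.2.2 : WithTop ℝ))) d)

/-- The function `f₀(x) = min(2x₁,2x₂,2x₃,a+x₁,b+x₂,c+x₃,d) − (x₁+x₂+x₃)`,
with `∞` terms omitted from the minimum.  (The minimum is never `⊤` since the
real terms `2xᵢ` are always present, so `untop' 0` extracts its real value.) -/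
def f0 (a b c d : WithTop ℝ) (x : R3) : ℝ :=
  WithTop.untopD 0 (tmin a b c d x) - (x.1 + x.2.1 + x.2.2)

/-- The skeleton `Sk(a,b,c,d)`. -/
def Sk (a b c d : WithTop ℝ) : Set R3 := {x | f0 a b c d x = 0}

/-- The tropicalized Vieta involution `trop(s₁)`. -/
def trop1 (a b c d : WithTop ℝ) (x : R3) : R3 :=
  (WithTop.untopD 0 (min (min ((2 * x.2.1 : ℝ) : WithTop ℝ) ((2 * x.2.2 : ℝ) : WithTop ℝ))
      (min (min (b + (x.2.1 : WithTop ℝ)) (c + (x.2.2 : WithTop ℝ))) d)) - x.1,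
    x.2.1, x.2.2)

/-- The tropicalized Vieta involution `trop(s₂)`. -/
def trop2 (a b c d : WithTop ℝ) (x : R3) : R3 :=
  (x.1,
    WithTop.untopD 0 (min (min ((2 * x.1 : ℝ) : WithTop ℝ) ((2 * x.2.2 : ℝ) : WithTop ℝ))
      (min (min (a + (x.1 : WithTop ℝ)) (c + (x.2.2 : WithTop ℝ))) d)) - x.2.1,
    x.2.2)

/-- The tropicalized Vieta involution `trop(s₃)`. -/
def trop3 (a b c d : WithTop ℝ) (x : R3) : R3 :=
  (x.1, x.2.1,
    WithTop.untopD 0 (min (min ((2 * x.1 : ℝ) : WithTop ℝ) ((2 * x.2.1 : ℝ) : WithTop ℝ))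
      (min (min (a + (x.1 : WithTop ℝ)) (b + (x.2.1 : WithTop ℝ))) d)) - x.2.2)

/-- The three tropicalized Vieta involutions, indexed by `Fin 3`. -/
def trop (a b c d : WithTop ℝ) : Fin 3 → R3 → R3 :=
  ![trop1 a b c d, trop2 a b c d, trop3 a b c d]

/-- The `i`-th coordinate of a point of `ℝ³`. -/
def coord : Fin 3 → R3 → ℝ := ![fun x => x.1, fun x => x.2.1, fun x => x.2.2]

/-- The quadratic cell `𝒞(Xᵢ²)` of the skeleton. -/
def cellX (a b c d : WithTop ℝ) (i : Fin 3) : Set R3 :=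
  {x ∈ Sk a b c d | x.1 + x.2.1 + x.2.2 = 2 * coord i x}

/-- The subquadratic cell `𝒞(AX₁)` of the skeleton. -/
def cellA (a b c d : WithTop ℝ) : Set R3 :=
  {x ∈ Sk a b c d | ((x.1 + x.2.1 + x.2.2 : ℝ) : WithTop ℝ) = a + (x.1 : WithTop ℝ)}

/-- The subquadratic cell `𝒞(BX₂)` of the skeleton. -/
def cellB (a b c d : WithTop ℝ) : Set R3 :=
  {x ∈ Sk a b c d | ((x.1 + x.2.1 + x.2.2 : ℝ) : WithTop ℝ) = b + (x.2.1 : WithTop ℝ)}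

/-- The subquadratic cell `𝒞(CX₃)` of the skeleton. -/
def cellC (a b c d : WithTop ℝ) : Set R3 :=
  {x ∈ Sk a b c d | ((x.1 + x.2.1 + x.2.2 : ℝ) : WithTop ℝ) = c + (x.2.2 : WithTop ℝ)}

/-- The subquadratic cell `𝒞(D)` of the skeleton. -/
def cellD (a b c d : WithTop ℝ) : Set R3 :=
  {x ∈ Sk a b c d | ((x.1 + x.2.1 + x.2.2 : ℝ) : WithTop ℝ) = d}

/-- Apply the word `l` of tropicalized Vieta involutions to the point `x`. -/
def applyWord (a b c d : WithTop ℝ) (l : List (Fin 3)) (x : R3) : R3 :=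
  l.foldl (fun y i => trop a b c d i y) x

section Aux
open WithTop

lemma coe_untop'' (t : WithTop ℝ) (h : t ≠ ⊤) : ((WithTop.untopD 0 t : ℝ) : WithTop ℝ) = t := by
  rcases t with _ | r
  · exact absurd rfl h
  · rfl

-- min5 pattern lemmas
variable {α : Type*} [LinearOrder α]

lemma min5_le1 (A B C D E : α) : min (min A B) (min (min C D) E) ≤ A :=
  le_trans (min_le_left _ _) (min_le_left _ _)
lemma min5_le2 (A B C D E : α) : min (min A B) (min (min C D) E) ≤ B :=
  le_trans (min_le_left _ _) (min_le_right _ _)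
lemma min5_le3 (A B C D E : α) : min (min A B) (min (min C D) E) ≤ C :=
  le_trans (min_le_right _ _) (le_trans (min_le_left _ _) (min_le_left _ _))
lemma min5_le4 (A B C D E : α) : min (min A B) (min (min C D) E) ≤ D :=
  le_trans (min_le_right _ _) (le_trans (min_le_left _ _) (min_le_right _ _))
lemma min5_le5 (A B C D E : α) : min (min A B) (min (min C D) E) ≤ E :=
  le_trans (min_le_right _ _) (min_le_right _ _)

lemma le_min5 {r A B C D E : α} (h1 : r ≤ A) (h2 : r ≤ B) (h3 : r ≤ C) (h4 : r ≤ D)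
    (h5 : r ≤ E) : r ≤ min (min A B) (min (min C D) E) :=
  le_min (le_min h1 h2) (le_min (le_min h3 h4) h5)

lemma min5_choice (A B C D E : α) :
    min (min A B) (min (min C D) E) = A ∨ min (min A B) (min (min C D) E) = B ∨
    min (min A B) (min (min C D) E) = C ∨ min (min A B) (min (min C D) E) = D ∨
    min (min A B) (min (min C D) E) = E := by
  rcases min_choice (min A B) (min (min C D) E) with h | h <;> rw [h]
  · rcases min_choice A B with h' | h' <;> rw [h'] <;> tauto
  · rcases min_choice (min C D) E with h' | h' <;> rw [h']
    · rcases min_choice C D with h'' | h'' <;> rw [h''] <;> tauto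
    · tauto

end Aux

section Tmin

variable {a b c d : WithTop ℝ} {x : R3}

lemma tmin_le1 (a b c d : WithTop ℝ) (x : R3) : tmin a b c d x ≤ ((2*x.1 : ℝ) : WithTop ℝ) :=
  le_trans (min_le_left _ _) (le_trans (min_le_left _ _) (min_le_left _ _))
lemma tmin_le2 (a b c d : WithTop ℝ) (x : R3) : tmin a b c d x ≤ ((2*x.2.1 : ℝ) : WithTop ℝ) :=
  le_trans (min_le_left _ _) (le_trans (min_le_left _ _) (min_le_right _ _))
lemma tmin_le3 (a b c d : WithTop ℝ) (x : R3) : tmin a b c d x ≤ ((2*x.2.2 : ℝ) : WithTop ℝ) :=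
  le_trans (min_le_left _ _) (le_trans (min_le_right _ _) (min_le_left _ _))
lemma tmin_le4 (a b c d : WithTop ℝ) (x : R3) : tmin a b c d x ≤ a + (x.1 : WithTop ℝ) :=
  le_trans (min_le_left _ _) (le_trans (min_le_right _ _) (min_le_right _ _))
lemma tmin_le5 (a b c d : WithTop ℝ) (x : R3) : tmin a b c d x ≤ b + (x.2.1 : WithTop ℝ) :=
  le_trans (min_le_right _ _) (le_trans (min_le_left _ _) (min_le_left _ _))
lemma tmin_le6 (a b c d : WithTop ℝ) (x : R3) : tmin a b c d x ≤ c + (x.2.2 : WithTop ℝ) :=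
  le_trans (min_le_right _ _) (le_trans (min_le_left _ _) (min_le_right _ _))
lemma tmin_le7 (a b c d : WithTop ℝ) (x : R3) : tmin a b c d x ≤ d :=
  le_trans (min_le_right _ _) (min_le_right _ _)

lemma le_tmin {r : WithTop ℝ} (h1 : r ≤ ((2*x.1 : ℝ) : WithTop ℝ))
    (h2 : r ≤ ((2*x.2.1 : ℝ) : WithTop ℝ)) (h3 : r ≤ ((2*x.2.2 : ℝ) : WithTop ℝ))
    (h4 : r ≤ a + (x.1 : WithTop ℝ)) (h5 : r ≤ b + (x.2.1 : WithTop ℝ))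
    (h6 : r ≤ c + (x.2.2 : WithTop ℝ)) (h7 : r ≤ d) : r ≤ tmin a b c d x :=
  le_min (le_min (le_min h1 h2) (le_min h3 h4)) (le_min (le_min h5 h6) h7)

lemma tmin_choice (a b c d : WithTop ℝ) (x : R3) :
    tmin a b c d x = ((2*x.1 : ℝ) : WithTop ℝ) ∨ tmin a b c d x = ((2*x.2.1 : ℝ) : WithTop ℝ) ∨
    tmin a b c d x = ((2*x.2.2 : ℝ) : WithTop ℝ) ∨ tmin a b c d x = a + (x.1 : WithTop ℝ) ∨
    tmin a b c d x = b + (x.2.1 : WithTop ℝ) ∨ tmin a b c d x = c + (x.2.2 : WithTop ℝ) ∨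
    tmin a b c d x = d := by
  unfold tmin
  rcases min_choice (min (min ((2 * x.1 : ℝ) : WithTop ℝ) ((2 * x.2.1 : ℝ) : WithTop ℝ))
      (min ((2 * x.2.2 : ℝ) : WithTop ℝ) (a + (x.1 : WithTop ℝ))))
    (min (min (b + (x.2.1 : WithTop ℝ)) (c + (x.2.2 : WithTop ℝ))) d) with h | h <;> rw [h]
  · rcases min_choice (min ((2 * x.1 : ℝ) : WithTop ℝ) ((2 * x.2.1 : ℝ) : WithTop ℝ))
      (min ((2 * x.2.2 : ℝ) : WithTop ℝ) (a + (x.1 : WithTop ℝ))) with h' | h' <;> rw [h']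
    · rcases min_choice ((2 * x.1 : ℝ) : WithTop ℝ) ((2 * x.2.1 : ℝ) : WithTop ℝ) with h'' | h'' <;> rw [h''] <;> tauto
    · rcases min_choice ((2 * x.2.2 : ℝ) : WithTop ℝ) (a + (x.1 : WithTop ℝ)) with h'' | h'' <;> rw [h''] <;> tauto
  · rcases min_choice (min (b + (x.2.1 : WithTop ℝ)) (c + (x.2.2 : WithTop ℝ))) d with h' | h' <;> rw [h']
    · rcases min_choice (b + (x.2.1 : WithTop ℝ)) (c + (x.2.2 : WithTop ℝ)) with h'' | h'' <;> rw [h''] <;> tauto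
    · tauto

lemma tmin_ne_top (a b c d : WithTop ℝ) (x : R3) : tmin a b c d x ≠ ⊤ :=
  ne_top_of_le_ne_top (WithTop.coe_ne_top) (tmin_le1 a b c d x)

lemma mem_sk_iff : x ∈ Sk a b c d ↔ tmin a b c d x = ((x.1 + x.2.1 + x.2.2 : ℝ) : WithTop ℝ) := by
  constructor
  · intro h
    have h' : WithTop.untopD 0 (tmin a b c d x) = x.1 + x.2.1 + x.2.2 := by
      simpa [Sk, f0, sub_eq_zero] using h
    rw [← coe_untop'' _ (tmin_ne_top a b c d x), h']
  · intro h
    simp [Sk, f0, h, ← WithTop.coe_add]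

lemma coe_add_le_iff (a : WithTop ℝ) (r t : ℝ) :
    ((r + t : ℝ) : WithTop ℝ) ≤ a + (t : WithTop ℝ) ↔ ((r:WithTop ℝ) ≤ a) := by
  induction a using WithTop.recTopCoe with
  | top => simp [le_top]
  | coe a =>
    rw [← WithTop.coe_add, WithTop.coe_le_coe, WithTop.coe_le_coe]
    exact add_le_add_iff_right t

end Tmin
/-- The target set. -/
def Tgt (a b c d : WithTop ℝ) : Set R3 :=
  cellA a b c d ∪ cellB a b c d ∪ cellC a b c d ∪ cellD a b c d ∪
    ⋃ (i : Fin 3) (j : Fin 3) (_ : i ≠ j), cellX a b c d i ∩ cellX a b c d j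

section Tgt
variable {a b c d : WithTop ℝ} {x : R3}

lemma memT_A (h : x ∈ cellA a b c d) : x ∈ Tgt a b c d :=
  Or.inl (Or.inl (Or.inl (Or.inl h)))
lemma memT_B (h : x ∈ cellB a b c d) : x ∈ Tgt a b c d :=
  Or.inl (Or.inl (Or.inl (Or.inr h)))
lemma memT_C (h : x ∈ cellC a b c d) : x ∈ Tgt a b c d :=
  Or.inl (Or.inl (Or.inr h))
lemma memT_D (h : x ∈ cellD a b c d) : x ∈ Tgt a b c d :=
  Or.inl (Or.inr h)
lemma memT_X {i j : Fin 3} (hij : i ≠ j) (h : x ∈ cellX a b c d i ∩ cellX a b c d j) :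
    x ∈ Tgt a b c d :=
  Or.inr (Set.mem_iUnion.2 ⟨i, Set.mem_iUnion.2 ⟨j, Set.mem_iUnion.2 ⟨hij, h⟩⟩⟩)

lemma coord0 (x : R3) : coord 0 x = x.1 := rfl
lemma coord1 (x : R3) : coord 1 x = x.2.1 := rfl
lemma coord2 (x : R3) : coord 2 x = x.2.2 := rfl

lemma trop_zero (a b c d : WithTop ℝ) : trop a b c d 0 = trop1 a b c d := rfl
lemma trop_one (a b c d : WithTop ℝ) : trop a b c d 1 = trop2 a b c d := rfl
lemma trop_two (a b c d : WithTop ℝ) : trop a b c d 2 = trop3 a b c d := rfl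

lemma applyWord_cons (a b c d : WithTop ℝ) (i : Fin 3) (l : List (Fin 3)) (x : R3) :
    applyWord a b c d (i :: l) x = applyWord a b c d l (trop a b c d i x) := rfl

lemma mem_cellX0 (hx : x ∈ Sk a b c d) (h : x.1 + x.2.1 + x.2.2 = 2 * x.1) :
    x ∈ cellX a b c d 0 := ⟨hx, h⟩
lemma mem_cellX1 (hx : x ∈ Sk a b c d) (h : x.1 + x.2.1 + x.2.2 = 2 * x.2.1) :
    x ∈ cellX a b c d 1 := ⟨hx, h⟩
lemma mem_cellX2 (hx : x ∈ Sk a b c d) (h : x.1 + x.2.1 + x.2.2 = 2 * x.2.2) :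
    x ∈ cellX a b c d 2 := ⟨hx, h⟩

end Tgt
section Dich
variable {a b c d : WithTop ℝ}

lemma dichotomy (a b c d : WithTop ℝ) (e : ℝ) (he : e < 0)
    (hE : a = (e : WithTop ℝ) ∨ b = (e : WithTop ℝ) ∨ c = (e : WithTop ℝ) ∨ d = (e : WithTop ℝ))
    (x : R3) (hx : x ∈ Sk a b c d) :
    x ∈ Tgt a b c d ∨
    (x.1 = x.2.1 + x.2.2 ∧ x.2.1 < 0 ∧ x.2.2 < 0 ∧ min x.2.1 x.2.2 < e/4) ∨
    (x.2.1 = x.1 + x.2.2 ∧ x.1 < 0 ∧ x.2.2 < 0 ∧ min x.1 x.2.2 < e/4) ∨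
    (x.2.2 = x.1 + x.2.1 ∧ x.1 < 0 ∧ x.2.1 < 0 ∧ min x.1 x.2.1 < e/4) := by
  obtain ⟨x1, x2, x3⟩ := x
  have hsk := mem_sk_iff.mp hx
  by_cases hA : ((x1 + x2 + x3 : ℝ) : WithTop ℝ) = a + (x1 : WithTop ℝ)
  · exact Or.inl (memT_A ⟨hx, hA⟩)
  by_cases hB : ((x1 + x2 + x3 : ℝ) : WithTop ℝ) = b + (x2 : WithTop ℝ)
  · exact Or.inl (memT_B ⟨hx, hB⟩)
  by_cases hC : ((x1 + x2 + x3 : ℝ) : WithTop ℝ) = c + (x3 : WithTop ℝ)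
  · exact Or.inl (memT_C ⟨hx, hC⟩)
  by_cases hD : ((x1 + x2 + x3 : ℝ) : WithTop ℝ) = d
  · exact Or.inl (memT_D ⟨hx, hD⟩)
  have hA' : ((x1 + x2 + x3 : ℝ) : WithTop ℝ) < a + (x1 : WithTop ℝ) :=
    lt_of_le_of_ne (hsk ▸ tmin_le4 a b c d (x1, x2, x3)) hA
  have hB' : ((x1 + x2 + x3 : ℝ) : WithTop ℝ) < b + (x2 : WithTop ℝ) :=
    lt_of_le_of_ne (hsk ▸ tmin_le5 a b c d (x1, x2, x3)) hB
  have hC' : ((x1 + x2 + x3 : ℝ) : WithTop ℝ) < c + (x3 : WithTop ℝ) :=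
    lt_of_le_of_ne (hsk ▸ tmin_le6 a b c d (x1, x2, x3)) hC
  have hD' : ((x1 + x2 + x3 : ℝ) : WithTop ℝ) < d :=
    lt_of_le_of_ne (hsk ▸ tmin_le7 a b c d (x1, x2, x3)) hD
  have hle1 : x1 + x2 + x3 ≤ 2 * x1 := by
    have := hsk ▸ tmin_le1 a b c d (x1, x2, x3); exact_mod_cast this
  have hle2 : x1 + x2 + x3 ≤ 2 * x2 := by
    have := hsk ▸ tmin_le2 a b c d (x1, x2, x3); exact_mod_cast this
  have hle3 : x1 + x2 + x3 ≤ 2 * x3 := by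
    have := hsk ▸ tmin_le3 a b c d (x1, x2, x3); exact_mod_cast this
  by_cases h1 : x1 + x2 + x3 = 2 * x1 <;> by_cases h2 : x1 + x2 + x3 = 2 * x2 <;>
    by_cases h3 : x1 + x2 + x3 = 2 * x3
  · exact Or.inl (memT_X (show (0:Fin 3) ≠ 1 by decide) ⟨mem_cellX0 hx h1, mem_cellX1 hx h2⟩)
  · exact Or.inl (memT_X (show (0:Fin 3) ≠ 1 by decide) ⟨mem_cellX0 hx h1, mem_cellX1 hx h2⟩)
  · exact Or.inl (memT_X (show (0:Fin 3) ≠ 2 by decide) ⟨mem_cellX0 hx h1, mem_cellX2 hx h3⟩)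
  · -- package 1
    have hs2 : x1 + x2 + x3 < 2 * x2 := lt_of_le_of_ne hle2 h2
    have hs3 : x1 + x2 + x3 < 2 * x3 := lt_of_le_of_ne hle3 h3
    have hx1 : x1 = x2 + x3 := by linarith
    refine Or.inr (Or.inl ⟨hx1, by linarith, by linarith, ?_⟩)
    rcases hE with rfl | rfl | rfl | rfl
    · rw [← WithTop.coe_add, WithTop.coe_lt_coe] at hA'
      rcases le_total x2 x3 with h | h
      · rw [min_eq_left h]; linarith
      · rw [min_eq_right h]; linarith
    · rw [← WithTop.coe_add, WithTop.coe_lt_coe] at hB'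
      rcases le_total x2 x3 with h | h
      · rw [min_eq_left h]; linarith
      · rw [min_eq_right h]; linarith
    · rw [← WithTop.coe_add, WithTop.coe_lt_coe] at hC'
      rcases le_total x2 x3 with h | h
      · rw [min_eq_left h]; linarith
      · rw [min_eq_right h]; linarith
    · rw [WithTop.coe_lt_coe] at hD'
      rcases le_total x2 x3 with h | h
      · rw [min_eq_left h]; linarith
      · rw [min_eq_right h]; linarith
  · exact Or.inl (memT_X (show (1:Fin 3) ≠ 2 by decide) ⟨mem_cellX1 hx h2, mem_cellX2 hx h3⟩)
  · -- package 2
    have hs1 : x1 + x2 + x3 < 2 * x1 := lt_of_le_of_ne hle1 h1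
    have hs3 : x1 + x2 + x3 < 2 * x3 := lt_of_le_of_ne hle3 h3
    have hx2 : x2 = x1 + x3 := by linarith
    refine Or.inr (Or.inr (Or.inl ⟨hx2, by linarith, by linarith, ?_⟩))
    rcases hE with rfl | rfl | rfl | rfl
    · rw [← WithTop.coe_add, WithTop.coe_lt_coe] at hA'
      rcases le_total x1 x3 with h | h
      · rw [min_eq_left h]; linarith
      · rw [min_eq_right h]; linarith
    · rw [← WithTop.coe_add, WithTop.coe_lt_coe] at hB'
      rcases le_total x1 x3 with h | h
      · rw [min_eq_left h]; linarith
      · rw [min_eq_right h]; linarith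
    · rw [← WithTop.coe_add, WithTop.coe_lt_coe] at hC'
      rcases le_total x1 x3 with h | h
      · rw [min_eq_left h]; linarith
      · rw [min_eq_right h]; linarith
    · rw [WithTop.coe_lt_coe] at hD'
      rcases le_total x1 x3 with h | h
      · rw [min_eq_left h]; linarith
      · rw [min_eq_right h]; linarith
  · -- package 3
    have hs1 : x1 + x2 + x3 < 2 * x1 := lt_of_le_of_ne hle1 h1
    have hs2 : x1 + x2 + x3 < 2 * x2 := lt_of_le_of_ne hle2 h2
    have hx3 : x3 = x1 + x2 := by linarith
    refine Or.inr (Or.inr (Or.inr ⟨hx3, by linarith, by linarith, ?_⟩))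
    rcases hE with rfl | rfl | rfl | rfl
    · rw [← WithTop.coe_add, WithTop.coe_lt_coe] at hA'
      rcases le_total x1 x2 with h | h
      · rw [min_eq_left h]; linarith
      · rw [min_eq_right h]; linarith
    · rw [← WithTop.coe_add, WithTop.coe_lt_coe] at hB'
      rcases le_total x1 x2 with h | h
      · rw [min_eq_left h]; linarith
      · rw [min_eq_right h]; linarith
    · rw [← WithTop.coe_add, WithTop.coe_lt_coe] at hC'
      rcases le_total x1 x2 with h | h
      · rw [min_eq_left h]; linarith
      · rw [min_eq_right h]; linarith
    · rw [WithTop.coe_lt_coe] at hD'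
      rcases le_total x1 x2 with h | h
      · rw [min_eq_left h]; linarith
      · rw [min_eq_right h]; linarith
  · -- no quadratic: contradiction
    exfalso
    rcases tmin_choice a b c d (x1, x2, x3) with hc | hc | hc | hc | hc | hc | hc <;>
      rw [hsk] at hc
    · exact h1 (by exact_mod_cast hc)
    · exact h2 (by exact_mod_cast hc)
    · exact h3 (by exact_mod_cast hc)
    · exact hA hc
    · exact hB hc
    · exact hC hc
    · exact hD hc

end Dich
def rhs1 (a b c d : WithTop ℝ) (x : R3) : WithTop ℝ :=
  min (min ((2 * x.2.1 : ℝ) : WithTop ℝ) ((2 * x.2.2 : ℝ) : WithTop ℝ))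
    (min (min (b + (x.2.1 : WithTop ℝ)) (c + (x.2.2 : WithTop ℝ))) d)

def rhs2 (a b c d : WithTop ℝ) (x : R3) : WithTop ℝ :=
  min (min ((2 * x.1 : ℝ) : WithTop ℝ) ((2 * x.2.2 : ℝ) : WithTop ℝ))
    (min (min (a + (x.1 : WithTop ℝ)) (c + (x.2.2 : WithTop ℝ))) d)

def rhs3 (a b c d : WithTop ℝ) (x : R3) : WithTop ℝ :=
  min (min ((2 * x.1 : ℝ) : WithTop ℝ) ((2 * x.2.1 : ℝ) : WithTop ℝ))
    (min (min (a + (x.1 : WithTop ℝ)) (b + (x.2.1 : WithTop ℝ))) d)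

section RHS
variable (a b c d : WithTop ℝ) (x : R3)

lemma trop1_eq : trop1 a b c d x = (WithTop.untopD 0 (rhs1 a b c d x) - x.1, x.2.1, x.2.2) := rfl
lemma trop2_eq : trop2 a b c d x = (x.1, WithTop.untopD 0 (rhs2 a b c d x) - x.2.1, x.2.2) := rfl
lemma trop3_eq : trop3 a b c d x = (x.1, x.2.1, WithTop.untopD 0 (rhs3 a b c d x) - x.2.2) := rfl

lemma rhs1_le1 : rhs1 a b c d x ≤ ((2*x.2.1 : ℝ) : WithTop ℝ) := min5_le1 _ _ _ _ _
lemma rhs1_le2 : rhs1 a b c d x ≤ ((2*x.2.2 : ℝ) : WithTop ℝ) := min5_le2 _ _ _ _ _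
lemma rhs1_le3 : rhs1 a b c d x ≤ b + (x.2.1 : WithTop ℝ) := min5_le3 _ _ _ _ _
lemma rhs1_le4 : rhs1 a b c d x ≤ c + (x.2.2 : WithTop ℝ) := min5_le4 _ _ _ _ _
lemma rhs1_le5 : rhs1 a b c d x ≤ d := min5_le5 _ _ _ _ _
lemma rhs1_choice : rhs1 a b c d x = ((2*x.2.1 : ℝ) : WithTop ℝ) ∨
    rhs1 a b c d x = ((2*x.2.2 : ℝ) : WithTop ℝ) ∨ rhs1 a b c d x = b + (x.2.1 : WithTop ℝ) ∨
    rhs1 a b c d x = c + (x.2.2 : WithTop ℝ) ∨ rhs1 a b c d x = d := min5_choice _ _ _ _ _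
lemma le_rhs1 {r : WithTop ℝ} (h1 : r ≤ ((2*x.2.1 : ℝ) : WithTop ℝ))
    (h2 : r ≤ ((2*x.2.2 : ℝ) : WithTop ℝ)) (h3 : r ≤ b + (x.2.1 : WithTop ℝ))
    (h4 : r ≤ c + (x.2.2 : WithTop ℝ)) (h5 : r ≤ d) : r ≤ rhs1 a b c d x :=
  le_min5 h1 h2 h3 h4 h5

lemma rhs2_le1 : rhs2 a b c d x ≤ ((2*x.1 : ℝ) : WithTop ℝ) := min5_le1 _ _ _ _ _
lemma rhs2_le2 : rhs2 a b c d x ≤ ((2*x.2.2 : ℝ) : WithTop ℝ) := min5_le2 _ _ _ _ _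
lemma rhs2_le3 : rhs2 a b c d x ≤ a + (x.1 : WithTop ℝ) := min5_le3 _ _ _ _ _
lemma rhs2_le4 : rhs2 a b c d x ≤ c + (x.2.2 : WithTop ℝ) := min5_le4 _ _ _ _ _
lemma rhs2_le5 : rhs2 a b c d x ≤ d := min5_le5 _ _ _ _ _
lemma rhs2_choice : rhs2 a b c d x = ((2*x.1 : ℝ) : WithTop ℝ) ∨
    rhs2 a b c d x = ((2*x.2.2 : ℝ) : WithTop ℝ) ∨ rhs2 a b c d x = a + (x.1 : WithTop ℝ) ∨
    rhs2 a b c d x = c + (x.2.2 : WithTop ℝ) ∨ rhs2 a b c d x = d := min5_choice _ _ _ _ _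
lemma le_rhs2 {r : WithTop ℝ} (h1 : r ≤ ((2*x.1 : ℝ) : WithTop ℝ))
    (h2 : r ≤ ((2*x.2.2 : ℝ) : WithTop ℝ)) (h3 : r ≤ a + (x.1 : WithTop ℝ))
    (h4 : r ≤ c + (x.2.2 : WithTop ℝ)) (h5 : r ≤ d) : r ≤ rhs2 a b c d x :=
  le_min5 h1 h2 h3 h4 h5

lemma rhs3_le1 : rhs3 a b c d x ≤ ((2*x.1 : ℝ) : WithTop ℝ) := min5_le1 _ _ _ _ _
lemma rhs3_le2 : rhs3 a b c d x ≤ ((2*x.2.1 : ℝ) : WithTop ℝ) := min5_le2 _ _ _ _ _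
lemma rhs3_le3 : rhs3 a b c d x ≤ a + (x.1 : WithTop ℝ) := min5_le3 _ _ _ _ _
lemma rhs3_le4 : rhs3 a b c d x ≤ b + (x.2.1 : WithTop ℝ) := min5_le4 _ _ _ _ _
lemma rhs3_le5 : rhs3 a b c d x ≤ d := min5_le5 _ _ _ _ _
lemma rhs3_choice : rhs3 a b c d x = ((2*x.1 : ℝ) : WithTop ℝ) ∨
    rhs3 a b c d x = ((2*x.2.1 : ℝ) : WithTop ℝ) ∨ rhs3 a b c d x = a + (x.1 : WithTop ℝ) ∨
    rhs3 a b c d x = b + (x.2.1 : WithTop ℝ) ∨ rhs3 a b c d x = d := min5_choice _ _ _ _ _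
lemma le_rhs3 {r : WithTop ℝ} (h1 : r ≤ ((2*x.1 : ℝ) : WithTop ℝ))
    (h2 : r ≤ ((2*x.2.1 : ℝ) : WithTop ℝ)) (h3 : r ≤ a + (x.1 : WithTop ℝ))
    (h4 : r ≤ b + (x.2.1 : WithTop ℝ)) (h5 : r ≤ d) : r ≤ rhs3 a b c d x :=
  le_min5 h1 h2 h3 h4 h5

end RHS
lemma step1 (a b c d : WithTop ℝ) (x : R3) (hx : x ∈ Sk a b c d)
    (h1 : x.1 = x.2.1 + x.2.2) :
    trop1 a b c d x ∈ Tgt a b c d ∨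
    (x.2.1 ≠ x.2.2 ∧ trop1 a b c d x ∈ Sk a b c d ∧
      trop1 a b c d x = (min x.2.1 x.2.2 - max x.2.1 x.2.2, x.2.1, x.2.2)) := by
  obtain ⟨x1, x2, x3⟩ := x
  simp only at h1
  set m : ℝ := WithTop.untopD 0 (rhs1 a b c d (x1, x2, x3)) with hmdef
  have hyeq : trop1 a b c d (x1, x2, x3) = (m - x1, x2, x3) := rfl
  have hnetop : rhs1 a b c d (x1, x2, x3) ≠ ⊤ :=
    ne_top_of_le_ne_top WithTop.coe_ne_top (rhs1_le1 a b c d (x1, x2, x3))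
  have hcm : ((m : ℝ) : WithTop ℝ) = rhs1 a b c d (x1, x2, x3) := coe_untop'' _ hnetop
  have hsk := mem_sk_iff.mp hx
  have hs_le : ((x1 + x2 + x3 : ℝ) : WithTop ℝ) ≤ rhs1 a b c d (x1, x2, x3) :=
    le_rhs1 a b c d _ (hsk ▸ tmin_le2 a b c d (x1, x2, x3))
      (hsk ▸ tmin_le3 a b c d (x1, x2, x3)) (hsk ▸ tmin_le5 a b c d (x1, x2, x3))
      (hsk ▸ tmin_le6 a b c d (x1, x2, x3)) (hsk ▸ tmin_le7 a b c d (x1, x2, x3))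
  have hSm : x1 + x2 + x3 ≤ m := by
    rw [← WithTop.coe_le_coe, hcm]; exact hs_le
  have hx1a : ((x1 : ℝ) : WithTop ℝ) ≤ a := by
    have h4 := hsk ▸ tmin_le4 a b c d (x1, x2, x3)
    have hrw : x1 + x2 + x3 = x1 + x1 := by rw [h1]; try ring
    rw [hrw] at h4
    exact (coe_add_le_iff a x1 x1).mp h4
  have hSy : (m - x1) + x2 + x3 = m := by rw [h1]; try ring
  have hySk : trop1 a b c d (x1, x2, x3) ∈ Sk a b c d := by
    rw [hyeq, mem_sk_iff]
    show tmin a b c d (m - x1, x2, x3) = (((m - x1) + x2 + x3 : ℝ) : WithTop ℝ)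
    rw [hSy]
    apply le_antisymm
    · rcases rhs1_choice a b c d (x1, x2, x3) with hc | hc | hc | hc | hc
      · calc tmin a b c d (m - x1, x2, x3) ≤ _ := tmin_le2 a b c d (m - x1, x2, x3)
          _ = ((m : ℝ) : WithTop ℝ) := by rw [hcm, hc]
      · calc tmin a b c d (m - x1, x2, x3) ≤ _ := tmin_le3 a b c d (m - x1, x2, x3)
          _ = ((m : ℝ) : WithTop ℝ) := by rw [hcm, hc]
      · calc tmin a b c d (m - x1, x2, x3) ≤ _ := tmin_le5 a b c d (m - x1, x2, x3)
          _ = ((m : ℝ) : WithTop ℝ) := by rw [hcm, hc]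
      · calc tmin a b c d (m - x1, x2, x3) ≤ _ := tmin_le6 a b c d (m - x1, x2, x3)
          _ = ((m : ℝ) : WithTop ℝ) := by rw [hcm, hc]
      · calc tmin a b c d (m - x1, x2, x3) ≤ _ := tmin_le7 a b c d (m - x1, x2, x3)
          _ = ((m : ℝ) : WithTop ℝ) := by rw [hcm, hc]
    · apply le_tmin
      · show ((m : ℝ) : WithTop ℝ) ≤ ((2 * (m - x1) : ℝ) : WithTop ℝ)
        rw [WithTop.coe_le_coe]
        have : x1 + x2 + x3 = 2 * x1 := by rw [h1]; try ring
        linarith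
      · rw [hcm]; exact rhs1_le1 a b c d (x1, x2, x3)
      · rw [hcm]; exact rhs1_le2 a b c d (x1, x2, x3)
      · show ((m : ℝ) : WithTop ℝ) ≤ a + ((m - x1 : ℝ) : WithTop ℝ)
        have h5 := (coe_add_le_iff a x1 (m - x1)).mpr hx1a
        have hrw : x1 + (m - x1) = m := by ring
        rwa [hrw] at h5
      · rw [hcm]; exact rhs1_le3 a b c d (x1, x2, x3)
      · rw [hcm]; exact rhs1_le4 a b c d (x1, x2, x3)
      · rw [hcm]; exact rhs1_le5 a b c d (x1, x2, x3)
  rcases rhs1_choice a b c d (x1, x2, x3) with hc | hc | hc | hc | hc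
  · -- m = 2 x2
    have hm2 : m = 2 * x2 := by
      have := hcm.trans hc; exact_mod_cast this
    have h23 : x2 ≤ x3 := by
      have h' := hcm ▸ rhs1_le2 a b c d (x1, x2, x3)
      have : (2*x2 : ℝ) ≤ 2*x3 := by rw [← hm2]; exact_mod_cast h'
      linarith
    by_cases hx23 : x2 = x3
    · left
      refine memT_X (show (1 : Fin 3) ≠ 2 by decide) ⟨⟨hySk, ?_⟩, ⟨hySk, ?_⟩⟩
      · show (m - x1) + x2 + x3 = 2 * x2
        rw [hSy, hm2]
      · show (m - x1) + x2 + x3 = 2 * x3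
        rw [hSy, hm2, hx23]
    · right
      refine ⟨hx23, hySk, ?_⟩
      rw [hyeq, min_eq_left h23, max_eq_right h23]
      have : m - x1 = x2 - x3 := by rw [hm2, h1]; ring
      rw [this]
  · -- m = 2 x3
    have hm3 : m = 2 * x3 := by
      have := hcm.trans hc; exact_mod_cast this
    have h32 : x3 ≤ x2 := by
      have h' := hcm ▸ rhs1_le1 a b c d (x1, x2, x3)
      have : (2*x3 : ℝ) ≤ 2*x2 := by rw [← hm3]; exact_mod_cast h'
      linarith
    by_cases hx23 : x2 = x3
    · left
      refine memT_X (show (1 : Fin 3) ≠ 2 by decide) ⟨⟨hySk, ?_⟩, ⟨hySk, ?_⟩⟩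
      · show (m - x1) + x2 + x3 = 2 * x2
        rw [hSy, hm3, hx23]
      · show (m - x1) + x2 + x3 = 2 * x3
        rw [hSy, hm3]
    · right
      refine ⟨hx23, hySk, ?_⟩
      rw [hyeq, min_eq_right h32, max_eq_left h32]
      have : m - x1 = x3 - x2 := by rw [hm3, h1]; ring
      rw [this]
  · -- b + x2 : cellB
    left; refine memT_B ⟨hySk, ?_⟩
    show (((m - x1) + x2 + x3 : ℝ) : WithTop ℝ) = b + ((x2 : ℝ) : WithTop ℝ)
    rw [hSy]; exact hcm.trans hc
  · -- c + x3 : cellC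
    left; refine memT_C ⟨hySk, ?_⟩
    show (((m - x1) + x2 + x3 : ℝ) : WithTop ℝ) = c + ((x3 : ℝ) : WithTop ℝ)
    rw [hSy]; exact hcm.trans hc
  · -- d : cellD
    left; refine memT_D ⟨hySk, ?_⟩
    show (((m - x1) + x2 + x3 : ℝ) : WithTop ℝ) = d
    rw [hSy]; exact hcm.trans hc
lemma step2 (a b c d : WithTop ℝ) (x : R3) (hx : x ∈ Sk a b c d)
    (h1 : x.2.1 = x.1 + x.2.2) :
    trop2 a b c d x ∈ Tgt a b c d ∨
    (x.1 ≠ x.2.2 ∧ trop2 a b c d x ∈ Sk a b c d ∧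
      trop2 a b c d x = (x.1, min x.1 x.2.2 - max x.1 x.2.2, x.2.2)) := by
  obtain ⟨x1, x2, x3⟩ := x
  simp only at h1
  set m : ℝ := WithTop.untopD 0 (rhs2 a b c d (x1, x2, x3)) with hmdef
  have hyeq : trop2 a b c d (x1, x2, x3) = (x1, m - x2, x3) := rfl
  have hnetop : rhs2 a b c d (x1, x2, x3) ≠ ⊤ :=
    ne_top_of_le_ne_top WithTop.coe_ne_top (rhs2_le1 a b c d (x1, x2, x3))
  have hcm : ((m : ℝ) : WithTop ℝ) = rhs2 a b c d (x1, x2, x3) := coe_untop'' _ hnetop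
  have hsk := mem_sk_iff.mp hx
  have hs_le : ((x1 + x2 + x3 : ℝ) : WithTop ℝ) ≤ rhs2 a b c d (x1, x2, x3) :=
    le_rhs2 a b c d _ (hsk ▸ tmin_le1 a b c d (x1, x2, x3))
      (hsk ▸ tmin_le3 a b c d (x1, x2, x3)) (hsk ▸ tmin_le4 a b c d (x1, x2, x3))
      (hsk ▸ tmin_le6 a b c d (x1, x2, x3)) (hsk ▸ tmin_le7 a b c d (x1, x2, x3))
  have hSm : x1 + x2 + x3 ≤ m := by
    rw [← WithTop.coe_le_coe, hcm]; exact hs_le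
  have hx2b : ((x2 : ℝ) : WithTop ℝ) ≤ b := by
    have h4 := hsk ▸ tmin_le5 a b c d (x1, x2, x3)
    have hrw : x1 + x2 + x3 = x2 + x2 := by rw [h1]; try ring
    rw [hrw] at h4
    exact (coe_add_le_iff b x2 x2).mp h4
  have hSy : x1 + (m - x2) + x3 = m := by rw [h1]; try ring
  have hySk : trop2 a b c d (x1, x2, x3) ∈ Sk a b c d := by
    rw [hyeq, mem_sk_iff]
    show tmin a b c d (x1, m - x2, x3) = ((x1 + (m - x2) + x3 : ℝ) : WithTop ℝ)
    rw [hSy]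
    apply le_antisymm
    · rcases rhs2_choice a b c d (x1, x2, x3) with hc | hc | hc | hc | hc
      · calc tmin a b c d (x1, m - x2, x3) ≤ _ := tmin_le1 a b c d (x1, m - x2, x3)
          _ = ((m : ℝ) : WithTop ℝ) := by rw [hcm, hc]
      · calc tmin a b c d (x1, m - x2, x3) ≤ _ := tmin_le3 a b c d (x1, m - x2, x3)
          _ = ((m : ℝ) : WithTop ℝ) := by rw [hcm, hc]
      · calc tmin a b c d (x1, m - x2, x3) ≤ _ := tmin_le4 a b c d (x1, m - x2, x3)
          _ = ((m : ℝ) : WithTop ℝ) := by rw [hcm, hc]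
      · calc tmin a b c d (x1, m - x2, x3) ≤ _ := tmin_le6 a b c d (x1, m - x2, x3)
          _ = ((m : ℝ) : WithTop ℝ) := by rw [hcm, hc]
      · calc tmin a b c d (x1, m - x2, x3) ≤ _ := tmin_le7 a b c d (x1, m - x2, x3)
          _ = ((m : ℝ) : WithTop ℝ) := by rw [hcm, hc]
    · apply le_tmin
      · rw [hcm]; exact rhs2_le1 a b c d (x1, x2, x3)
      · show ((m : ℝ) : WithTop ℝ) ≤ ((2 * (m - x2) : ℝ) : WithTop ℝ)
        rw [WithTop.coe_le_coe]
        have : x1 + x2 + x3 = 2 * x2 := by rw [h1]; try ring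
        linarith
      · rw [hcm]; exact rhs2_le2 a b c d (x1, x2, x3)
      · rw [hcm]; exact rhs2_le3 a b c d (x1, x2, x3)
      · show ((m : ℝ) : WithTop ℝ) ≤ b + ((m - x2 : ℝ) : WithTop ℝ)
        have h5 := (coe_add_le_iff b x2 (m - x2)).mpr hx2b
        have hrw : x2 + (m - x2) = m := by ring
        rwa [hrw] at h5
      · rw [hcm]; exact rhs2_le4 a b c d (x1, x2, x3)
      · rw [hcm]; exact rhs2_le5 a b c d (x1, x2, x3)
  rcases rhs2_choice a b c d (x1, x2, x3) with hc | hc | hc | hc | hc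
  · -- m = 2 x1
    have hm2 : m = 2 * x1 := by
      have := hcm.trans hc; exact_mod_cast this
    have h13 : x1 ≤ x3 := by
      have h' := hcm ▸ rhs2_le2 a b c d (x1, x2, x3)
      have : (2*x1 : ℝ) ≤ 2*x3 := by rw [← hm2]; exact_mod_cast h'
      linarith
    by_cases hx13 : x1 = x3
    · left
      refine memT_X (show (0 : Fin 3) ≠ 2 by decide) ⟨⟨hySk, ?_⟩, ⟨hySk, ?_⟩⟩
      · show x1 + (m - x2) + x3 = 2 * x1
        rw [hSy, hm2]
      · show x1 + (m - x2) + x3 = 2 * x3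
        rw [hSy, hm2, hx13]
    · right
      refine ⟨hx13, hySk, ?_⟩
      rw [hyeq, min_eq_left h13, max_eq_right h13]
      have : m - x2 = x1 - x3 := by rw [hm2, h1]; ring
      rw [this]
  · -- m = 2 x3
    have hm3 : m = 2 * x3 := by
      have := hcm.trans hc; exact_mod_cast this
    have h31 : x3 ≤ x1 := by
      have h' := hcm ▸ rhs2_le1 a b c d (x1, x2, x3)
      have : (2*x3 : ℝ) ≤ 2*x1 := by rw [← hm3]; exact_mod_cast h'
      linarith
    by_cases hx13 : x1 = x3
    · left
      refine memT_X (show (0 : Fin 3) ≠ 2 by decide) ⟨⟨hySk, ?_⟩, ⟨hySk, ?_⟩⟩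
      · show x1 + (m - x2) + x3 = 2 * x1
        rw [hSy, hm3, hx13]
      · show x1 + (m - x2) + x3 = 2 * x3
        rw [hSy, hm3]
    · right
      refine ⟨hx13, hySk, ?_⟩
      rw [hyeq, min_eq_right h31, max_eq_left h31]
      have : m - x2 = x3 - x1 := by rw [hm3, h1]; ring
      rw [this]
  · -- a + x1 : cellA
    left; refine memT_A ⟨hySk, ?_⟩
    show ((x1 + (m - x2) + x3 : ℝ) : WithTop ℝ) = a + ((x1 : ℝ) : WithTop ℝ)
    rw [hSy]; exact hcm.trans hc
  · -- c + x3 : cellC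
    left; refine memT_C ⟨hySk, ?_⟩
    show ((x1 + (m - x2) + x3 : ℝ) : WithTop ℝ) = c + ((x3 : ℝ) : WithTop ℝ)
    rw [hSy]; exact hcm.trans hc
  · -- d : cellD
    left; refine memT_D ⟨hySk, ?_⟩
    show ((x1 + (m - x2) + x3 : ℝ) : WithTop ℝ) = d
    rw [hSy]; exact hcm.trans hc

lemma step3 (a b c d : WithTop ℝ) (x : R3) (hx : x ∈ Sk a b c d)
    (h1 : x.2.2 = x.1 + x.2.1) :
    trop3 a b c d x ∈ Tgt a b c d ∨
    (x.1 ≠ x.2.1 ∧ trop3 a b c d x ∈ Sk a b c d ∧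
      trop3 a b c d x = (x.1, x.2.1, min x.1 x.2.1 - max x.1 x.2.1)) := by
  obtain ⟨x1, x2, x3⟩ := x
  simp only at h1
  set m : ℝ := WithTop.untopD 0 (rhs3 a b c d (x1, x2, x3)) with hmdef
  have hyeq : trop3 a b c d (x1, x2, x3) = (x1, x2, m - x3) := rfl
  have hnetop : rhs3 a b c d (x1, x2, x3) ≠ ⊤ :=
    ne_top_of_le_ne_top WithTop.coe_ne_top (rhs3_le1 a b c d (x1, x2, x3))
  have hcm : ((m : ℝ) : WithTop ℝ) = rhs3 a b c d (x1, x2, x3) := coe_untop'' _ hnetop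
  have hsk := mem_sk_iff.mp hx
  have hs_le : ((x1 + x2 + x3 : ℝ) : WithTop ℝ) ≤ rhs3 a b c d (x1, x2, x3) :=
    le_rhs3 a b c d _ (hsk ▸ tmin_le1 a b c d (x1, x2, x3))
      (hsk ▸ tmin_le2 a b c d (x1, x2, x3)) (hsk ▸ tmin_le4 a b c d (x1, x2, x3))
      (hsk ▸ tmin_le5 a b c d (x1, x2, x3)) (hsk ▸ tmin_le7 a b c d (x1, x2, x3))
  have hSm : x1 + x2 + x3 ≤ m := by
    rw [← WithTop.coe_le_coe, hcm]; exact hs_le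
  have hx3c : ((x3 : ℝ) : WithTop ℝ) ≤ c := by
    have h4 := hsk ▸ tmin_le6 a b c d (x1, x2, x3)
    have hrw : x1 + x2 + x3 = x3 + x3 := by rw [h1]; try ring
    rw [hrw] at h4
    exact (coe_add_le_iff c x3 x3).mp h4
  have hSy : x1 + x2 + (m - x3) = m := by rw [h1]; try ring
  have hySk : trop3 a b c d (x1, x2, x3) ∈ Sk a b c d := by
    rw [hyeq, mem_sk_iff]
    show tmin a b c d (x1, x2, m - x3) = ((x1 + x2 + (m - x3) : ℝ) : WithTop ℝ)
    rw [hSy]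
    apply le_antisymm
    · rcases rhs3_choice a b c d (x1, x2, x3) with hc | hc | hc | hc | hc
      · calc tmin a b c d (x1, x2, m - x3) ≤ _ := tmin_le1 a b c d (x1, x2, m - x3)
          _ = ((m : ℝ) : WithTop ℝ) := by rw [hcm, hc]
      · calc tmin a b c d (x1, x2, m - x3) ≤ _ := tmin_le2 a b c d (x1, x2, m - x3)
          _ = ((m : ℝ) : WithTop ℝ) := by rw [hcm, hc]
      · calc tmin a b c d (x1, x2, m - x3) ≤ _ := tmin_le4 a b c d (x1, x2, m - x3)
          _ = ((m : ℝ) : WithTop ℝ) := by rw [hcm, hc]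
      · calc tmin a b c d (x1, x2, m - x3) ≤ _ := tmin_le5 a b c d (x1, x2, m - x3)
          _ = ((m : ℝ) : WithTop ℝ) := by rw [hcm, hc]
      · calc tmin a b c d (x1, x2, m - x3) ≤ _ := tmin_le7 a b c d (x1, x2, m - x3)
          _ = ((m : ℝ) : WithTop ℝ) := by rw [hcm, hc]
    · apply le_tmin
      · rw [hcm]; exact rhs3_le1 a b c d (x1, x2, x3)
      · rw [hcm]; exact rhs3_le2 a b c d (x1, x2, x3)
      · show ((m : ℝ) : WithTop ℝ) ≤ ((2 * (m - x3) : ℝ) : WithTop ℝ)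
        rw [WithTop.coe_le_coe]
        have : x1 + x2 + x3 = 2 * x3 := by rw [h1]; try ring
        linarith
      · rw [hcm]; exact rhs3_le3 a b c d (x1, x2, x3)
      · rw [hcm]; exact rhs3_le4 a b c d (x1, x2, x3)
      · show ((m : ℝ) : WithTop ℝ) ≤ c + ((m - x3 : ℝ) : WithTop ℝ)
        have h5 := (coe_add_le_iff c x3 (m - x3)).mpr hx3c
        have hrw : x3 + (m - x3) = m := by ring
        rwa [hrw] at h5
      · rw [hcm]; exact rhs3_le5 a b c d (x1, x2, x3)
  rcases rhs3_choice a b c d (x1, x2, x3) with hc | hc | hc | hc | hc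
  · -- m = 2 x1
    have hm2 : m = 2 * x1 := by
      have := hcm.trans hc; exact_mod_cast this
    have h12 : x1 ≤ x2 := by
      have h' := hcm ▸ rhs3_le2 a b c d (x1, x2, x3)
      have : (2*x1 : ℝ) ≤ 2*x2 := by rw [← hm2]; exact_mod_cast h'
      linarith
    by_cases hx12 : x1 = x2
    · left
      refine memT_X (show (0 : Fin 3) ≠ 1 by decide) ⟨⟨hySk, ?_⟩, ⟨hySk, ?_⟩⟩
      · show x1 + x2 + (m - x3) = 2 * x1
        rw [hSy, hm2]
      · show x1 + x2 + (m - x3) = 2 * x2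
        rw [hSy, hm2, hx12]
    · right
      refine ⟨hx12, hySk, ?_⟩
      rw [hyeq, min_eq_left h12, max_eq_right h12]
      have : m - x3 = x1 - x2 := by rw [hm2, h1]; ring
      rw [this]
  · -- m = 2 x2
    have hm3 : m = 2 * x2 := by
      have := hcm.trans hc; exact_mod_cast this
    have h21 : x2 ≤ x1 := by
      have h' := hcm ▸ rhs3_le1 a b c d (x1, x2, x3)
      have : (2*x2 : ℝ) ≤ 2*x1 := by rw [← hm3]; exact_mod_cast h'
      linarith
    by_cases hx12 : x1 = x2
    · left
      refine memT_X (show (0 : Fin 3) ≠ 1 by decide) ⟨⟨hySk, ?_⟩, ⟨hySk, ?_⟩⟩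
      · show x1 + x2 + (m - x3) = 2 * x1
        rw [hSy, hm3, hx12]
      · show x1 + x2 + (m - x3) = 2 * x2
        rw [hSy, hm3]
    · right
      refine ⟨hx12, hySk, ?_⟩
      rw [hyeq, min_eq_right h21, max_eq_left h21]
      have : m - x3 = x2 - x1 := by rw [hm3, h1]; ring
      rw [this]
  · -- a + x1 : cellA
    left; refine memT_A ⟨hySk, ?_⟩
    show ((x1 + x2 + (m - x3) : ℝ) : WithTop ℝ) = a + ((x1 : ℝ) : WithTop ℝ)
    rw [hSy]; exact hcm.trans hc
  · -- b + x2 : cellB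
    left; refine memT_B ⟨hySk, ?_⟩
    show ((x1 + x2 + (m - x3) : ℝ) : WithTop ℝ) = b + ((x2 : ℝ) : WithTop ℝ)
    rw [hSy]; exact hcm.trans hc
  · -- d : cellD
    left; refine memT_D ⟨hySk, ?_⟩
    show ((x1 + x2 + (m - x3) : ℝ) : WithTop ℝ) = d
    rw [hSy]; exact hcm.trans hc
def Max3 (x : R3) : ℝ := max x.1 (max x.2.1 x.2.2)

lemma Max3_def (x : R3) : Max3 x = max x.1 (max x.2.1 x.2.2) := rfl

lemma nat_bound (p q : ℝ) (hq : 0 < q) : ∃ n : ℕ, p ≤ (n : ℝ) * q :=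
  ⟨⌈p / q⌉₊, (div_le_iff₀ hq).mp (Nat.le_ceil (p / q))⟩

lemma key (e : ℝ) (he : e < 0) :
    ∀ k n : ℕ, ∀ a b c d : WithTop ℝ,
      (a = (e : WithTop ℝ) ∨ b = (e : WithTop ℝ) ∨ c = (e : WithTop ℝ) ∨ d = (e : WithTop ℝ)) →
      ∀ x : R3, x ∈ Sk a b c d →
      (-4) * (x.1 + x.2.1 + x.2.2) ≤ (k : ℝ) * (-e) →
      (0 ≤ Max3 x ∨ Max3 x - (x.1 + x.2.1 + x.2.2) / 2 ≤ (n : ℝ) * (-(Max3 x))) →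
      ∃ l : List (Fin 3), applyWord a b c d l x ∈ Tgt a b c d := by
  intro k
  induction k with
  | zero =>
    intro n a b c d hE x hx hk hn
    rcases dichotomy a b c d e he hE x hx with hT | hP | hP | hP
    · exact ⟨[], hT⟩
    · exfalso
      obtain ⟨h1, ho1, ho2, hmin⟩ := hP
      rcases le_total x.2.1 x.2.2 with h | h
      · rw [min_eq_left h] at hmin; push_cast at hk; linarith
      · rw [min_eq_right h] at hmin; push_cast at hk; linarith
    · exfalso
      obtain ⟨h1, ho1, ho2, hmin⟩ := hP
      rcases le_total x.1 x.2.2 with h | h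
      · rw [min_eq_left h] at hmin; push_cast at hk; linarith
      · rw [min_eq_right h] at hmin; push_cast at hk; linarith
    · exfalso
      obtain ⟨h1, ho1, ho2, hmin⟩ := hP
      rcases le_total x.1 x.2.1 with h | h
      · rw [min_eq_left h] at hmin; push_cast at hk; linarith
      · rw [min_eq_right h] at hmin; push_cast at hk; linarith
  | succ k IHk =>
    intro n
    induction n with
    | zero =>
      intro a b c d hE x hx hk hn
      rcases dichotomy a b c d e he hE x hx with hT | hP | hP | hP
      · exact ⟨[], hT⟩
      · exfalso
        obtain ⟨h1, ho1, ho2, hmin⟩ := hP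
        rcases hn with hn | hn
        · rw [Max3_def, max_def, max_def] at hn; split_ifs at hn <;> linarith
        · rw [Max3_def, max_def, max_def] at hn; split_ifs at hn <;> push_cast at hn <;> linarith
      · exfalso
        obtain ⟨h1, ho1, ho2, hmin⟩ := hP
        rcases hn with hn | hn
        · rw [Max3_def, max_def, max_def] at hn; split_ifs at hn <;> linarith
        · rw [Max3_def, max_def, max_def] at hn; split_ifs at hn <;> push_cast at hn <;> linarith
      · exfalso
        obtain ⟨h1, ho1, ho2, hmin⟩ := hP
        rcases hn with hn | hn
        · rw [Max3_def, max_def, max_def] at hn; split_ifs at hn <;> linarith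
        · rw [Max3_def, max_def, max_def] at hn; split_ifs at hn <;> push_cast at hn <;> linarith
    | succ n IHn =>
      intro a b c d hE x hx hk hn
      rcases dichotomy a b c d e he hE x hx with hT | hP | hP | hP
      · exact ⟨[], hT⟩
      · obtain ⟨h1, ho1, ho2, hmin⟩ := hP
        rcases step1 a b c d x hx h1 with hT | ⟨hne, hySk, hyco⟩
        · exact ⟨[0], hT⟩
        rcases le_total x.2.1 x.2.2 with h | h
        · rw [min_eq_left h, max_eq_right h] at hyco
          rw [min_eq_left h] at hmin
          have hne' : x.2.1 < x.2.2 := lt_of_le_of_ne h hne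
          have hSy : (trop1 a b c d x).1 + (trop1 a b c d x).2.1 + (trop1 a b c d x).2.2
              = 2 * x.2.1 := by
            rw [hyco]; exact show (x.2.1 - x.2.2) + (x.2.1) + (x.2.2) = 2 * x.2.1 by ring
          by_cases hblock : x.2.1 ≤ 2 * x.2.2
          · have hMy : Max3 (trop1 a b c d x) = x.2.2 := by
              rw [hyco, Max3_def]
              exact show max (x.2.1 - x.2.2) (max (x.2.1) (x.2.2)) = x.2.2 by
                rw [max_def, max_def]; split_ifs <;> linarith
            have hMx : Max3 x = x.2.2 := by
              rw [Max3_def, max_def, max_def]; split_ifs <;> linarith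
            rw [hMx] at hn
            rcases hn with hn | hn
            · exact absurd hn (by linarith)
            obtain ⟨l, hl⟩ := IHn a b c d hE (trop1 a b c d x) hySk
              (by rw [hSy]; push_cast at hk ⊢; linarith)
              (Or.inr (by rw [hMy, hSy]; push_cast at hn ⊢; linarith))
            exact ⟨0 :: l, hl⟩
          · push_neg at hblock
            have hMy : Max3 (trop1 a b c d x) = x.2.1 - x.2.2 := by
              rw [hyco, Max3_def]
              exact show max (x.2.1 - x.2.2) (max (x.2.1) (x.2.2)) = x.2.1 - x.2.2 by
                rw [max_def, max_def]; split_ifs <;> linarith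
            obtain ⟨n', hn'b⟩ := nat_bound (-x.2.2) (x.2.2 - x.2.1) (by linarith)
            obtain ⟨l, hl⟩ := IHk n' a b c d hE (trop1 a b c d x) hySk
              (by rw [hSy]; push_cast at hk ⊢; linarith)
              (Or.inr (by rw [hMy, hSy]; push_cast; linarith [hn'b]))
            exact ⟨0 :: l, hl⟩
        · rw [min_eq_right h, max_eq_left h] at hyco
          rw [min_eq_right h] at hmin
          have hne' : x.2.2 < x.2.1 := lt_of_le_of_ne h (Ne.symm hne)
          have hSy : (trop1 a b c d x).1 + (trop1 a b c d x).2.1 + (trop1 a b c d x).2.2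
              = 2 * x.2.2 := by
            rw [hyco]; exact show (x.2.2 - x.2.1) + (x.2.1) + (x.2.2) = 2 * x.2.2 by ring
          by_cases hblock : x.2.2 ≤ 2 * x.2.1
          · have hMy : Max3 (trop1 a b c d x) = x.2.1 := by
              rw [hyco, Max3_def]
              exact show max (x.2.2 - x.2.1) (max (x.2.1) (x.2.2)) = x.2.1 by
                rw [max_def, max_def]; split_ifs <;> linarith
            have hMx : Max3 x = x.2.1 := by
              rw [Max3_def, max_def, max_def]; split_ifs <;> linarith
            rw [hMx] at hn
            rcases hn with hn | hn
            · exact absurd hn (by linarith)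
            obtain ⟨l, hl⟩ := IHn a b c d hE (trop1 a b c d x) hySk
              (by rw [hSy]; push_cast at hk ⊢; linarith)
              (Or.inr (by rw [hMy, hSy]; push_cast at hn ⊢; linarith))
            exact ⟨0 :: l, hl⟩
          · push_neg at hblock
            have hMy : Max3 (trop1 a b c d x) = x.2.2 - x.2.1 := by
              rw [hyco, Max3_def]
              exact show max (x.2.2 - x.2.1) (max (x.2.1) (x.2.2)) = x.2.2 - x.2.1 by
                rw [max_def, max_def]; split_ifs <;> linarith
            obtain ⟨n', hn'b⟩ := nat_bound (-x.2.1) (x.2.1 - x.2.2) (by linarith)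
            obtain ⟨l, hl⟩ := IHk n' a b c d hE (trop1 a b c d x) hySk
              (by rw [hSy]; push_cast at hk ⊢; linarith)
              (Or.inr (by rw [hMy, hSy]; push_cast; linarith [hn'b]))
            exact ⟨0 :: l, hl⟩
      · obtain ⟨h1, ho1, ho2, hmin⟩ := hP
        rcases step2 a b c d x hx h1 with hT | ⟨hne, hySk, hyco⟩
        · exact ⟨[1], hT⟩
        rcases le_total x.1 x.2.2 with h | h
        · rw [min_eq_left h, max_eq_right h] at hyco
          rw [min_eq_left h] at hmin
          have hne' : x.1 < x.2.2 := lt_of_le_of_ne h hne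
          have hSy : (trop2 a b c d x).1 + (trop2 a b c d x).2.1 + (trop2 a b c d x).2.2
              = 2 * x.1 := by
            rw [hyco]; exact show (x.1) + (x.1 - x.2.2) + (x.2.2) = 2 * x.1 by ring
          by_cases hblock : x.1 ≤ 2 * x.2.2
          · have hMy : Max3 (trop2 a b c d x) = x.2.2 := by
              rw [hyco, Max3_def]
              exact show max (x.1) (max (x.1 - x.2.2) (x.2.2)) = x.2.2 by
                rw [max_def, max_def]; split_ifs <;> linarith
            have hMx : Max3 x = x.2.2 := by
              rw [Max3_def, max_def, max_def]; split_ifs <;> linarith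
            rw [hMx] at hn
            rcases hn with hn | hn
            · exact absurd hn (by linarith)
            obtain ⟨l, hl⟩ := IHn a b c d hE (trop2 a b c d x) hySk
              (by rw [hSy]; push_cast at hk ⊢; linarith)
              (Or.inr (by rw [hMy, hSy]; push_cast at hn ⊢; linarith))
            exact ⟨1 :: l, hl⟩
          · push_neg at hblock
            have hMy : Max3 (trop2 a b c d x) = x.1 - x.2.2 := by
              rw [hyco, Max3_def]
              exact show max (x.1) (max (x.1 - x.2.2) (x.2.2)) = x.1 - x.2.2 by
                rw [max_def, max_def]; split_ifs <;> linarith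
            obtain ⟨n', hn'b⟩ := nat_bound (-x.2.2) (x.2.2 - x.1) (by linarith)
            obtain ⟨l, hl⟩ := IHk n' a b c d hE (trop2 a b c d x) hySk
              (by rw [hSy]; push_cast at hk ⊢; linarith)
              (Or.inr (by rw [hMy, hSy]; push_cast; linarith [hn'b]))
            exact ⟨1 :: l, hl⟩
        · rw [min_eq_right h, max_eq_left h] at hyco
          rw [min_eq_right h] at hmin
          have hne' : x.2.2 < x.1 := lt_of_le_of_ne h (Ne.symm hne)
          have hSy : (trop2 a b c d x).1 + (trop2 a b c d x).2.1 + (trop2 a b c d x).2.2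
              = 2 * x.2.2 := by
            rw [hyco]; exact show (x.1) + (x.2.2 - x.1) + (x.2.2) = 2 * x.2.2 by ring
          by_cases hblock : x.2.2 ≤ 2 * x.1
          · have hMy : Max3 (trop2 a b c d x) = x.1 := by
              rw [hyco, Max3_def]
              exact show max (x.1) (max (x.2.2 - x.1) (x.2.2)) = x.1 by
                rw [max_def, max_def]; split_ifs <;> linarith
            have hMx : Max3 x = x.1 := by
              rw [Max3_def, max_def, max_def]; split_ifs <;> linarith
            rw [hMx] at hn
            rcases hn with hn | hn
            · exact absurd hn (by linarith)
            obtain ⟨l, hl⟩ := IHn a b c d hE (trop2 a b c d x) hySk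
              (by rw [hSy]; push_cast at hk ⊢; linarith)
              (Or.inr (by rw [hMy, hSy]; push_cast at hn ⊢; linarith))
            exact ⟨1 :: l, hl⟩
          · push_neg at hblock
            have hMy : Max3 (trop2 a b c d x) = x.2.2 - x.1 := by
              rw [hyco, Max3_def]
              exact show max (x.1) (max (x.2.2 - x.1) (x.2.2)) = x.2.2 - x.1 by
                rw [max_def, max_def]; split_ifs <;> linarith
            obtain ⟨n', hn'b⟩ := nat_bound (-x.1) (x.1 - x.2.2) (by linarith)
            obtain ⟨l, hl⟩ := IHk n' a b c d hE (trop2 a b c d x) hySk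
              (by rw [hSy]; push_cast at hk ⊢; linarith)
              (Or.inr (by rw [hMy, hSy]; push_cast; linarith [hn'b]))
            exact ⟨1 :: l, hl⟩
      · obtain ⟨h1, ho1, ho2, hmin⟩ := hP
        rcases step3 a b c d x hx h1 with hT | ⟨hne, hySk, hyco⟩
        · exact ⟨[2], hT⟩
        rcases le_total x.1 x.2.1 with h | h
        · rw [min_eq_left h, max_eq_right h] at hyco
          rw [min_eq_left h] at hmin
          have hne' : x.1 < x.2.1 := lt_of_le_of_ne h hne
          have hSy : (trop3 a b c d x).1 + (trop3 a b c d x).2.1 + (trop3 a b c d x).2.2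
              = 2 * x.1 := by
            rw [hyco]; exact show (x.1) + (x.2.1) + (x.1 - x.2.1) = 2 * x.1 by ring
          by_cases hblock : x.1 ≤ 2 * x.2.1
          · have hMy : Max3 (trop3 a b c d x) = x.2.1 := by
              rw [hyco, Max3_def]
              exact show max (x.1) (max (x.2.1) (x.1 - x.2.1)) = x.2.1 by
                rw [max_def, max_def]; split_ifs <;> linarith
            have hMx : Max3 x = x.2.1 := by
              rw [Max3_def, max_def, max_def]; split_ifs <;> linarith
            rw [hMx] at hn
            rcases hn with hn | hn
            · exact absurd hn (by linarith)
            obtain ⟨l, hl⟩ := IHn a b c d hE (trop3 a b c d x) hySk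
              (by rw [hSy]; push_cast at hk ⊢; linarith)
              (Or.inr (by rw [hMy, hSy]; push_cast at hn ⊢; linarith))
            exact ⟨2 :: l, hl⟩
          · push_neg at hblock
            have hMy : Max3 (trop3 a b c d x) = x.1 - x.2.1 := by
              rw [hyco, Max3_def]
              exact show max (x.1) (max (x.2.1) (x.1 - x.2.1)) = x.1 - x.2.1 by
                rw [max_def, max_def]; split_ifs <;> linarith
            obtain ⟨n', hn'b⟩ := nat_bound (-x.2.1) (x.2.1 - x.1) (by linarith)
            obtain ⟨l, hl⟩ := IHk n' a b c d hE (trop3 a b c d x) hySk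
              (by rw [hSy]; push_cast at hk ⊢; linarith)
              (Or.inr (by rw [hMy, hSy]; push_cast; linarith [hn'b]))
            exact ⟨2 :: l, hl⟩
        · rw [min_eq_right h, max_eq_left h] at hyco
          rw [min_eq_right h] at hmin
          have hne' : x.2.1 < x.1 := lt_of_le_of_ne h (Ne.symm hne)
          have hSy : (trop3 a b c d x).1 + (trop3 a b c d x).2.1 + (trop3 a b c d x).2.2
              = 2 * x.2.1 := by
            rw [hyco]; exact show (x.1) + (x.2.1) + (x.2.1 - x.1) = 2 * x.2.1 by ring
          by_cases hblock : x.2.1 ≤ 2 * x.1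
          · have hMy : Max3 (trop3 a b c d x) = x.1 := by
              rw [hyco, Max3_def]
              exact show max (x.1) (max (x.2.1) (x.2.1 - x.1)) = x.1 by
                rw [max_def, max_def]; split_ifs <;> linarith
            have hMx : Max3 x = x.1 := by
              rw [Max3_def, max_def, max_def]; split_ifs <;> linarith
            rw [hMx] at hn
            rcases hn with hn | hn
            · exact absurd hn (by linarith)
            obtain ⟨l, hl⟩ := IHn a b c d hE (trop3 a b c d x) hySk
              (by rw [hSy]; push_cast at hk ⊢; linarith)
              (Or.inr (by rw [hMy, hSy]; push_cast at hn ⊢; linarith))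
            exact ⟨2 :: l, hl⟩
          · push_neg at hblock
            have hMy : Max3 (trop3 a b c d x) = x.2.1 - x.1 := by
              rw [hyco, Max3_def]
              exact show max (x.1) (max (x.2.1) (x.2.1 - x.1)) = x.2.1 - x.1 by
                rw [max_def, max_def]; split_ifs <;> linarith
            obtain ⟨n', hn'b⟩ := nat_bound (-x.1) (x.1 - x.2.1) (by linarith)
            obtain ⟨l, hl⟩ := IHk n' a b c d hE (trop3 a b c d x) hySk
              (by rw [hSy]; push_cast at hk ⊢; linarith)
              (Or.inr (by rw [hMy, hSy]; push_cast; linarith [hn'b]))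
            exact ⟨2 :: l, hl⟩
theorem statement11 (a b c d : WithTop ℝ)
    (hmer : min (min a b) (min c d) < (0 : WithTop ℝ))
    (x : R3) (hx : x ∈ Sk a b c d) :
    ∃ l : List (Fin 3),
      applyWord a b c d l x ∈
        cellA a b c d ∪ cellB a b c d ∪ cellC a b c d ∪ cellD a b c d ∪
          ⋃ (i : Fin 3) (j : Fin 3) (_ : i ≠ j), cellX a b c d i ∩ cellX a b c d j := by
  obtain ⟨e, he, hE⟩ : ∃ e : ℝ, e < 0 ∧
      (a = (e : WithTop ℝ) ∨ b = (e : WithTop ℝ) ∨ c = (e : WithTop ℝ) ∨ d = (e : WithTop ℝ)) := by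
    rcases min_lt_iff.mp hmer with h | h
    · rcases min_lt_iff.mp h with h' | h'
      · obtain ⟨e, he1, he2⟩ := WithTop.lt_iff_exists_coe.mp h'
        exact ⟨e, by exact_mod_cast he2, Or.inl he1⟩
      · obtain ⟨e, he1, he2⟩ := WithTop.lt_iff_exists_coe.mp h'
        exact ⟨e, by exact_mod_cast he2, Or.inr (Or.inl he1)⟩
    · rcases min_lt_iff.mp h with h' | h'
      · obtain ⟨e, he1, he2⟩ := WithTop.lt_iff_exists_coe.mp h'
        exact ⟨e, by exact_mod_cast he2, Or.inr (Or.inr (Or.inl he1))⟩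
      · obtain ⟨e, he1, he2⟩ := WithTop.lt_iff_exists_coe.mp h'
        exact ⟨e, by exact_mod_cast he2, Or.inr (Or.inr (Or.inr he1))⟩
  obtain ⟨k, hk⟩ := nat_bound ((-4) * (x.1 + x.2.1 + x.2.2)) (-e) (by linarith)
  by_cases h0 : 0 ≤ Max3 x
  · obtain ⟨l, hl⟩ := key e he k 0 a b c d hE x hx hk (Or.inl h0)
    exact ⟨l, hl⟩
  · push_neg at h0
    obtain ⟨n, hn⟩ := nat_bound (Max3 x - (x.1 + x.2.1 + x.2.2) / 2) (-(Max3 x)) (by linarith)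
    obtain ⟨l, hl⟩ := key e he k n a b c d hE x hx hk (Or.inr hn)
    exact ⟨l, hl⟩
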